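/- arXiv:0905.2271 — 3 statements merged into one kernel-verified Lean document; each statement's English description precedes it below -/
import Mathlib

section
/- Let G be a group acting ℂ-linearly on a complex vector space V via ρ: G → GL(V), and let V = V_+ ⊕ V_- be a direct sum decomposition with projections P_+, P_-. Form the semidirect product G ⋉ V with multiplication (g,α)(g',α') = (gg', α + ρ(g)α'). Suppose g ∈ G factors as g = g_-^{-1} g_+. Set α_+ = P_+(ρ(g_-)α) and α_- = −P_-(ρ(g_-)α). Then α_+ ∈ V_+, α_- ∈ V_-, and (g,α) = (g_-,α_-)^{-1}(g_+,α_+) in G ⋉ V; moreover, for the fixed factorization g = g_-^{-1}g_+, the pair (α_-, α_+) with α_± ∈ V_± and (g,α) = (g_-,α_-)^{-1}(g_+,α_+) is unique. (Applied to the character group of a Hopf algebra acting by the coadjoint action on the dual of its Lie algebra of infinitesimal characters, this gives the Birkhoff decomposition of every element of the semidirect product group.) -/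
/-!
In `G ⋉ V` one has `(h,a)⁻¹(k,b) = (h⁻¹k, ρ(h⁻¹)(b - a))`, so `(g,α) = (g₋,β₋)⁻¹(g₊,β₊)` says exactly
that `g = g₋⁻¹g₊` and `β₊ - β₋ = ρ(g₋)α`. Existence and uniqueness of `(β₋, β₊)` are therefore
existence and uniqueness of the decomposition of `ρ(g₋)α` along `V = V₊ ⊕ V₋`.
-/

noncomputable section

variable {G V : Type} [Group G] [AddCommGroup V] [Module ℂ V]

/-- Multiplication `(g,α)(g',α') = (gg', α + ρ(g)α')` on the semidirect
product `G ⋉ V`. -/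
def sdMul (ρ : G →* (V ≃ₗ[ℂ] V)) (a b : G × V) : G × V :=
  (a.1 * b.1, a.2 + ρ a.1 b.2)

/-- Inversion `(g,α)⁻¹ = (g⁻¹, −ρ(g⁻¹)α)` on the semidirect product `G ⋉ V`. -/
def sdInv (ρ : G →* (V ≃ₗ[ℂ] V)) (a : G × V) : G × V :=
  (a.1⁻¹, -(ρ a.1⁻¹ a.2))

theorem Submodule.eq_and_eq_of_sub_eq_sub_of_disjoint {R M : Type*} [Ring R] [AddCommGroup M]
    [Module R M] {p q : Submodule R M} (hpq : Disjoint p q) {a a' b b' : M}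
    (ha : a ∈ p) (ha' : a' ∈ p) (hb : b ∈ q) (hb' : b' ∈ q) (h : a - b = a' - b') :
    a = a' ∧ b = b' := by
  have hdiff : a - a' = b - b' := sub_eq_sub_iff_sub_eq_sub.mp h
  have hzero : a - a' = 0 :=
    Submodule.disjoint_def.mp hpq _ (sub_mem ha ha') (hdiff ▸ sub_mem hb hb')
  exact ⟨sub_eq_zero.mp hzero, sub_eq_zero.mp (hdiff ▸ hzero)⟩

theorem sdMul_sdInv (ρ : G →* (V ≃ₗ[ℂ] V)) (h k : G) (a b : V) :
    sdMul ρ (sdInv ρ (h, a)) (k, b) = (h⁻¹ * k, ρ h⁻¹ (b - a)) := by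
  simp only [sdMul, sdInv, sub_eq_neg_add, map_add, map_neg]

theorem sdMul_sdInv_eq_iff (ρ : G →* (V ≃ₗ[ℂ] V)) (h k g : G) (a b α : V) :
    sdMul ρ (sdInv ρ (h, a)) (k, b) = (g, α) ↔ h⁻¹ * k = g ∧ b - a = ρ h α := by
  rw [sdMul_sdInv, Prod.mk.injEq, map_inv, LinearEquiv.coe_inv, LinearEquiv.symm_apply_eq]

/-- Let a group `G` act `ℂ`-linearly on `V` via `ρ`, let `V = V₊ ⊕ V₋` with
projections `P₊, P₋`, and form the semidirect product `G ⋉ V`.  If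
`g = g₋⁻¹ g₊` then, with `α₊ = P₊(ρ(g₋)α)` and `α₋ = −P₋(ρ(g₋)α)`, we have
`α₊ ∈ V₊`, `α₋ ∈ V₋`, `(g,α) = (g₋,α₋)⁻¹(g₊,α₊)` in `G ⋉ V`, and for the fixed
factorization `g = g₋⁻¹g₊` the pair `(α₋,α₊)` with these properties is unique.
(Applied to the character group of a Hopf algebra acting by the coadjoint
action on the dual of its Lie algebra of infinitesimal characters, this gives
the Birkhoff decomposition of every element of the semidirect product.) -/
theorem semidirect_birkhoff (ρ : G →* (V ≃ₗ[ℂ] V))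
    (Vp Vm : Submodule ℂ V) (hcompl : IsCompl Vp Vm)
    (Pp Pm : V →ₗ[ℂ] V)
    (hPp : ∀ v, Pp v ∈ Vp) (hPm : ∀ v, Pm v ∈ Vm) (hPsum : ∀ v, Pp v + Pm v = v)
    (g gm gp : G) (α : V) (hfact : g = gm⁻¹ * gp) :
    Pp (ρ gm α) ∈ Vp ∧ -(Pm (ρ gm α)) ∈ Vm ∧
    sdMul ρ (sdInv ρ (gm, -(Pm (ρ gm α)))) (gp, Pp (ρ gm α)) = (g, α) ∧
    (∀ bm bp : V, bm ∈ Vm → bp ∈ Vp →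
      sdMul ρ (sdInv ρ (gm, bm)) (gp, bp) = (g, α) →
      bm = -(Pm (ρ gm α)) ∧ bp = Pp (ρ gm α)) := by
  set v := ρ gm α
  have hsplit : Pp v - -Pm v = v := by rw [sub_neg_eq_add, hPsum]
  refine ⟨hPp v, neg_mem (hPm v), (sdMul_sdInv_eq_iff ..).mpr ⟨hfact.symm, hsplit⟩, ?_⟩
  intro bm bp hbm hbp hprod
  obtain ⟨-, hbsplit⟩ := (sdMul_sdInv_eq_iff ..).mp hprod
  exact (Submodule.eq_and_eq_of_sub_eq_sub_of_disjoint hcompl.disjoint hbp (hPp v) hbm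
    (neg_mem (hPm v)) (hbsplit.trans hsplit.symm)).symm

end
end

section
/- Let H be a graded connected Hopf algebra over ℂ and let φ ∈ G_A be a local character. Then tildeβ_φ, defined by tildeβ_φ(x) = (d/dt)|_{t=0}(φ^{-1}⋆φ^t)(x), is (i) an infinitesimal character: tildeβ_φ ∈ g_A, and (ii) holomorphic: tildeβ_φ(x) ∈ A_+ = ℂ[[λ]] for every x ∈ H. -/
open scoped TensorProduct

set_option synthInstance.maxHeartbeats 1000000
set_option maxHeartbeats 1600000
set_option linter.unnecessarySeqFocus false

noncomputable section

/-- The algebra `A = ℂ((λ))` of formal Laurent series with finite pole part. -/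
abbrev LS := LaurentSeries ℂ

/-- `ℂ`-scalars commute with multiplication of Laurent series. -/
instance : SMulCommClass ℂ LS LS := by
  constructor
  intro c a b
  show c • (a * b) = a * (c • b)
  rw [← HahnSeries.single_zero_mul_eq_smul, ← HahnSeries.single_zero_mul_eq_smul]
  ring

/-- Scalar tower for `ℂ`-scalars and Laurent series. -/
instance : IsScalarTower ℂ LS LS := by
  constructor
  intro c a b
  show (c • a) * b = c • (a * b)
  rw [← HahnSeries.single_zero_mul_eq_smul, ← HahnSeries.single_zero_mul_eq_smul]
  ring

/-- `A₊ = ℂ[[λ]]`: the holomorphic part. -/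
def Aplus (f : LS) : Prop := ∀ n : ℤ, n < 0 → f.coeff n = 0

/-- `A₋ = λ⁻¹ℂ[λ⁻¹]`: the polar part. -/
def Aminus (f : LS) : Prop := ∀ n : ℤ, 0 ≤ n → f.coeff n = 0

/-- The formal variable `λ`. -/
def lam : LS := HahnSeries.single (1 : ℤ) (1 : ℂ)

/-- `λ^k` for `k : ℤ`. -/
def lamZ (k : ℤ) : LS := HahnSeries.single k (1 : ℂ)

/-- `e^{cλ} = Σ_k c^k λ^k / k!` as a Laurent series. -/
def expL (c : ℂ) : LS :=
  HahnSeries.ofPowerSeries ℤ ℂ (PowerSeries.mk fun k => c ^ k / (k.factorial : ℂ))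

section Hopf

variable {H : Type} [Ring H] [HopfAlgebra ℂ H]

/-- Convolution product of linear maps from a Hopf algebra to `A`. -/
def conv (f g : H →ₗ[ℂ] LS) : H →ₗ[ℂ] LS :=
  LinearMap.mul' ℂ LS ∘ₗ TensorProduct.map f g ∘ₗ Coalgebra.comul

/-- The unit `ε` of the convolution algebra. -/
def epsA : H →ₗ[ℂ] LS := LinearMap.toSpanSingleton ℂ LS 1 ∘ₗ Coalgebra.counit

/-- Characters: algebra morphisms `H → A` sending `1` to `1`. -/
def IsCharacter (φ : H →ₗ[ℂ] LS) : Prop :=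
  φ 1 = 1 ∧ ∀ x y : H, φ (x * y) = φ x * φ y

/-- The group inverse of a character: `φ⁻¹ = φ ∘ S`. -/
def charInv (φ : H →ₗ[ℂ] LS) : H →ₗ[ℂ] LS := φ ∘ₗ HopfAlgebra.antipode (R := ℂ)

/-- Infinitesimal characters: `Z(xy) = Z(x)ε(y) + ε(x)Z(y)`. -/
def IsInfChar (Z : H →ₗ[ℂ] LS) : Prop :=
  ∀ x y : H, Z (x * y) = Z x * epsA y + epsA x * Z y

/-- The Lie bracket `[Z,Z'] = Z⋆Z' − Z'⋆Z` on infinitesimal characters. -/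
def lieBr (Z W : H →ₗ[ℂ] LS) : H →ₗ[ℂ] LS := conv Z W - conv W Z

/-- The adjoint action `Ad(g)L = g⋆L⋆g⁻¹`. -/
def Adc (g L : H →ₗ[ℂ] LS) : H →ₗ[ℂ] LS := conv g (conv L (charInv g))

/-- Convolution powers `Z^{⋆k}`. -/
def convPow (Z : H →ₗ[ℂ] LS) : ℕ → (H →ₗ[ℂ] LS)
  | 0 => epsA
  | k + 1 => conv Z (convPow Z k)

/-- `E = exp(Z)`, the convolution exponential: for each `x ∈ H` the series
`Σ_k Z^{⋆k}(x)/k!` stabilizes (a finite sum by connectedness) with value `E(x)`. -/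
def IsConvExp (Z E : H →ₗ[ℂ] LS) : Prop :=
  ∀ x : H, ∃ N : ℕ, ∀ M : ℕ, N ≤ M →
    E x = ∑ k ∈ Finset.range M, ((k.factorial : ℂ))⁻¹ • convPow Z k x

/- ℂ-valued (scalar) versions, for `β`-functions. -/

/-- Convolution product of ℂ-valued linear maps on a Hopf algebra. -/
def convC (f g : H →ₗ[ℂ] ℂ) : H →ₗ[ℂ] ℂ :=
  LinearMap.mul' ℂ ℂ ∘ₗ TensorProduct.map f g ∘ₗ Coalgebra.comul

/-- ℂ-valued characters. -/
def IsCharacterC (φ : H →ₗ[ℂ] ℂ) : Prop :=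
  φ 1 = 1 ∧ ∀ x y : H, φ (x * y) = φ x * φ y

/-- The group inverse of a ℂ-valued character. -/
def charInvC (φ : H →ₗ[ℂ] ℂ) : H →ₗ[ℂ] ℂ := φ ∘ₗ HopfAlgebra.antipode (R := ℂ)

/-- ℂ-valued infinitesimal characters. -/
def IsInfCharC (Z : H →ₗ[ℂ] ℂ) : Prop :=
  ∀ x y : H, Z (x * y) = Z x * Coalgebra.counit y + Coalgebra.counit x * Z y

end Hopf

section Graded

variable {H : Type} [Ring H] [HopfAlgebra ℂ H]
variable (𝒜 : ℕ → Submodule ℂ H) [GradedAlgebra 𝒜]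

/-- Connectedness: `H₀ = ℂ·1`. -/
def IsConnectedGrading : Prop := 𝒜 0 = Submodule.span ℂ {(1 : H)}

/-- The coproduct is grading-preserving: `Δ(H_n) ⊆ Σ_{i+j=n} H_i ⊗ H_j`. -/
def ComulGraded : Prop :=
  ∀ n : ℕ, ∀ x ∈ 𝒜 n, Coalgebra.comul (R := ℂ) x ∈
    ⨆ p : {p : ℕ × ℕ // p.1 + p.2 = n},
      LinearMap.range (TensorProduct.map ((𝒜 p.1.1).subtype) ((𝒜 p.1.2).subtype))

/-- The counit is grading-preserving: it vanishes in positive degrees. -/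
def CounitGraded : Prop := ∀ n : ℕ, 0 < n → ∀ x ∈ 𝒜 n, Coalgebra.counit (R := ℂ) x = 0

/-- The antipode is grading-preserving. -/
def AntipodeGraded : Prop := ∀ n : ℕ, ∀ x ∈ 𝒜 n, HopfAlgebra.antipode (R := ℂ) x ∈ 𝒜 n

/-- The grading biderivation `Y(x) = n·x` for `x ∈ H_n`. -/
def Ymap : H →ₗ[ℂ] H :=
  (DFinsupp.lsum ℕ fun n : ℕ => ((n : ℂ) • (𝒜 n).subtype)) ∘ₗ
    (DirectSum.decomposeLinearEquiv 𝒜).toLinearMap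

/-- `φ^t`, defined by `φ^t(x) = e^{tλn}·φ(x)` for homogeneous `x` of degree `n`. -/
def charScale (t : ℂ) (φ : H →ₗ[ℂ] LS) : H →ₗ[ℂ] LS :=
  (DFinsupp.lsum ℕ fun n : ℕ => (expL (t * (n : ℂ)) • (φ ∘ₗ (𝒜 n).subtype))) ∘ₗ
    (DirectSum.decomposeLinearEquiv 𝒜).toLinearMap

/-- `R̃(φ) = φ^{-1} ⋆ (φ ∘ Y)`. -/
def Rtilde (φ : H →ₗ[ℂ] LS) : H →ₗ[ℂ] LS := conv (charInv φ) (φ ∘ₗ Ymap 𝒜)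

/-- `(φm, φp)` is the Birkhoff decomposition of `φ`: `φ = φm^{-1} ⋆ φp`, i.e. `φm ⋆ φ = φp`,
with `φp` holomorphic and `φm − ε` a pure pole part. -/
def IsBirkhoff (φ φm φp : H →ₗ[ℂ] LS) : Prop :=
  IsCharacter φm ∧ IsCharacter φp ∧ (∀ x, Aplus (φp x)) ∧
    (∀ x, Aminus (φm x - epsA x)) ∧ conv φm φ = φp

/-- A character is local if the negative Birkhoff part of `φ^t` is independent of `t`. -/
def IsLocal (φ : H →ₗ[ℂ] LS) : Prop :=
  IsCharacter φ ∧ ∃ φm : H →ₗ[ℂ] LS, ∀ t : ℂ, ∃ φp, IsBirkhoff (charScale 𝒜 t φ) φm φp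

/-- `B = tildeβ_φ`:  `B(x) = (d/dt)|_{t=0} (φ^{-1} ⋆ φ^t)(x)`, coefficientwise. -/
def HasTildeBeta (φ B : H →ₗ[ℂ] LS) : Prop :=
  ∀ (x : H) (n : ℤ),
    HasDerivAt (fun t : ℂ => ((conv (charInv φ) (charScale 𝒜 t φ)) x).coeff n)
      ((B x).coeff n) 0

/-- The `β`-function `β_φ = −(Res φ₋) ∘ Y` of a local character whose negative
Birkhoff part is `φm`. -/
def betaFn (φm : H →ₗ[ℂ] LS) : H → ℂ := fun x => -((φm (Ymap 𝒜 x)).coeff (-1))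

end Graded

section Curves

variable {H : Type} [Ring H] [HopfAlgebra ℂ H]

/-- Pointwise (coefficientwise) derivative of a curve of maps `H → A`. -/
def HasDerivAtF (F : ℝ → (H →ₗ[ℂ] LS)) (F' : H →ₗ[ℂ] LS) (t : ℝ) : Prop :=
  ∀ (x : H) (n : ℤ), HasDerivAt (fun s : ℝ => ((F s) x).coeff n) ((F' x).coeff n) t

/-- Pointwise differentiability of a curve of maps `H → A`. -/
def PointwiseDifferentiable (F : ℝ → (H →ₗ[ℂ] LS)) : Prop :=
  ∀ (x : H) (n : ℤ), Differentiable ℝ (fun s : ℝ => ((F s) x).coeff n)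

end Curves

/-- The operator `R = P₊ − P₋` on Laurent series. -/
def Rop : LS →ₗ[ℂ] LS where
  toFun f :=
    { coeff := fun n => if n < 0 then -f.coeff n else f.coeff n
      isPWO_support' := f.isPWO_support'.mono (by
        intro n hn
        simp only [Function.mem_support] at hn ⊢
        by_cases h : n < 0 <;> simp_all) }
  map_add' f g := by
    ext n
    by_cases h : n < 0 <;> simp [h] <;> ring
  map_smul' c f := by
    ext n
    by_cases h : n < 0 <;> simp [h]


/-!
Differentiating `e^{tλn}` at `t = 0` gives `tildeβ_φ = λ · φ⁻¹ ⋆ (φ ∘ Y)`. This is an infinitesimal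
character because the grading operator `Y` is a derivation and, `A` being commutative, `φ⁻¹ = φ ∘ S`
is again a character. For holomorphy, locality says that all `φ^t` share the negative Birkhoff
part `φ₋`, so `φ⁻¹ ⋆ φ^t = (φ₊)⁻¹ ⋆ (φ^t)₊` takes values in `A₊ = ℂ[[λ]]` for every `t`: each polar
coefficient of `φ⁻¹ ⋆ φ^t` vanishes identically in `t`, hence so does its derivative.
-/

open WithConv Coalgebra DirectSum HahnSeries

/- Mathlib's first choice, `HahnSeries.powerSeriesAlgebra`, induces a module structure that is not
reducibly the one in `H →ₗ[ℂ] LS`, which would hide the convolution semiring on these maps. -/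
instance : Algebra ℂ LS := HahnSeries.instAlgebra

lemma aplus_iff_zero_le_orderTop {f : LS} : Aplus f ↔ 0 ≤ f.orderTop := by
  rw [le_orderTop_iff_forall]
  exact forall_congr' fun n => by rw [WithTop.coe_lt_zero]

def holomorphicSubring : Subring LS where
  carrier := {f | Aplus f}
  one_mem' := by simp [aplus_iff_zero_le_orderTop, orderTop_one]
  zero_mem' := by simp [aplus_iff_zero_le_orderTop]
  mul_mem' {f g} hf hg := by
    simp only [Set.mem_ofPred_eq, aplus_iff_zero_le_orderTop] at *
    exact (add_nonneg hf hg).trans orderTop_add_le_mul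
  add_mem' {f g} hf hg := by
    simp only [Set.mem_ofPred_eq, aplus_iff_zero_le_orderTop] at *
    exact (le_min hf hg).trans min_orderTop_le_orderTop_add
  neg_mem' {f} hf := by
    simpa only [Set.mem_ofPred_eq, aplus_iff_zero_le_orderTop, orderTop_neg] using hf

lemma expL_zero : expL 0 = 1 := by
  have : (PowerSeries.mk fun k => (0 : ℂ) ^ k / (k.factorial : ℂ)) = 1 := by
    ext k
    rw [PowerSeries.coeff_mk, PowerSeries.coeff_one]
    rcases k with _ | k <;> simp
  rw [expL, this, map_one]

lemma coeff_expL_of_neg (c : ℂ) {n : ℤ} (hn : n < 0) : (expL c).coeff n = 0 := by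
  rw [expL, ofPowerSeries_apply]
  exact embDomain_of_notMem_range fun ⟨k, hk⟩ => by
    have : (k : ℤ) = n := hk
    omega

lemma coeff_expL_natCast (c : ℂ) (k : ℕ) : (expL c).coeff (k : ℤ) = c ^ k / k.factorial := by
  rw [expL, ofPowerSeries_apply_coeff, PowerSeries.coeff_mk]

lemma le_orderTop_expL_sub_sum_range (c : ℂ) (K : ℕ) :
    ((K : ℤ) : WithTop ℤ) ≤
      (expL c - ∑ k ∈ Finset.range K, single (k : ℤ) (c ^ k / k.factorial)).orderTop := by
  refine le_orderTop_iff_forall.2 fun j hj => ?_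
  rw [WithTop.coe_lt_coe] at hj
  rw [coeff_sub, coeff_sum]
  rcases lt_or_ge j 0 with hneg | hpos
  · rw [coeff_expL_of_neg c hneg, Finset.sum_eq_zero fun k _ => coeff_single_of_ne (by omega),
      sub_zero]
  · lift j to ℕ using hpos
    rw [coeff_expL_natCast, Finset.sum_eq_single_of_mem j (by simp; omega)
      fun k _ hk => coeff_single_of_ne (by exact_mod_cast Ne.symm hk), coeff_single_same, sub_self]

lemma coeff_expL_mul_eq_sum (c : ℂ) (w : LS) {n : ℤ} {K : ℕ}
    (hK : (n : WithTop ℤ) < (K : ℤ) + w.orderTop) :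
    (expL c * w).coeff n = ∑ k ∈ Finset.range K, c ^ k / k.factorial * w.coeff (n - k) := by
  have htail : ((expL c - ∑ k ∈ Finset.range K, single (k : ℤ) (c ^ k / k.factorial)) * w).coeff n
      = 0 := by
    apply coeff_eq_zero_of_lt_orderTop
    calc (n : WithTop ℤ) < (K : ℤ) + w.orderTop := hK
      _ ≤ _ := add_le_add_left (le_orderTop_expL_sub_sum_range c K) _
      _ ≤ _ := orderTop_add_le_mul
  rw [← sub_add_cancel (expL c) (∑ k ∈ Finset.range K, single (k : ℤ) (c ^ k / k.factorial)),
    add_mul, coeff_add, htail, zero_add, Finset.sum_mul, coeff_sum]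
  exact Finset.sum_congr rfl fun k _ => coeff_single_mul

lemma coeff_lam_mul (w : LS) (n : ℤ) : (lam * w).coeff n = w.coeff (n - 1) := by
  rw [lam, coeff_single_mul, one_mul]

lemma exists_two_le_lt_natCast_add_orderTop (w : LS) (n : ℤ) :
    ∃ K : ℕ, 2 ≤ K ∧ (n : WithTop ℤ) < (K : ℤ) + w.orderTop := by
  rcases eq_or_ne w 0 with rfl | hw
  · exact ⟨2, le_rfl, by simp⟩
  · refine ⟨max 2 (n - w.order + 1).toNat, le_max_left _ _, ?_⟩
    rw [← order_eq_orderTop_of_ne_zero hw, ← WithTop.coe_add, WithTop.coe_lt_coe]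
    omega

lemma hasDerivAt_coeff_expL_mul (c : ℂ) (w : LS) (n : ℤ) :
    HasDerivAt (fun t : ℂ => (expL (t * c) * w).coeff n) ((lam * (c • w)).coeff n) 0 := by
  obtain ⟨K, hK2, hK⟩ := exists_two_le_lt_natCast_add_orderTop w n
  have hterm : ∀ k ∈ Finset.range K, HasDerivAt
      (fun t : ℂ => (t * c) ^ k / k.factorial * w.coeff (n - k))
      (if k = 1 then c * w.coeff (n - 1) else 0) 0 := by
    intro k _
    have hf : (fun t : ℂ => (t * c) ^ k / k.factorial * w.coeff (n - k))
        = fun t => c ^ k / k.factorial * w.coeff (n - k) * t ^ k := by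
      ext t; ring
    rw [hf]
    refine ((hasDerivAt_pow k (0 : ℂ)).const_mul _).congr_deriv ?_
    rcases k with _ | _ | k <;> simp
  have hsum := HasDerivAt.fun_sum hterm
  rw [Finset.sum_ite_eq', if_pos (Finset.mem_range.2 hK2)] at hsum
  rw [coeff_lam_mul, coeff_smul, smul_eq_mul]
  exact hsum.congr_of_eventuallyEq
    (Filter.Eventually.of_forall fun t => coeff_expL_mul_eq_sum (t * c) w hK)

section Convolution

variable {H : Type} [Ring H] [HopfAlgebra ℂ H]

lemma toConv_conv (f g : H →ₗ[ℂ] LS) : toConv (conv f g) = toConv f * toConv g := rfl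

lemma toConv_epsA : toConv (epsA : H →ₗ[ℂ] LS) = 1 := by
  ext x : 2
  simp [epsA, Algebra.algebraMap_eq_smul_one]

lemma Coalgebra.Repr.conv_apply {x : H} {ι : Type*} (r : Coalgebra.Repr ℂ x ι)
    (f g : H →ₗ[ℂ] LS) : conv f g x = ∑ i ∈ r.index, f (r.left i) * g (r.right i) :=
  r.convMul_apply (toConv f) (toConv g)

lemma IsInfChar.smul {Z : H →ₗ[ℂ] LS} (hZ : IsInfChar Z) (c : LS) : IsInfChar (c • Z) := by
  intro x y
  simp only [LinearMap.smul_apply, smul_eq_mul, hZ x y]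
  ring

namespace IsCharacter

variable {φ : H →ₗ[ℂ] LS}

lemma charInv_mul (hφ : IsCharacter φ) (x y : H) :
    charInv φ (x * y) = charInv φ x * charInv φ y := by
  simp only [charInv, LinearMap.comp_apply, HopfAlgebra.antipode_mul_antidistrib, hφ.2, mul_comm]

lemma charInv_mul_self (hφ : IsCharacter φ) : toConv (charInv φ) * toConv φ = 1 := by
  ext x : 2
  rw [(ℛ ℂ x).convMul_apply]
  simp only [charInv, LinearMap.comp_apply, ← hφ.2, ← map_sum,
    HopfAlgebra.sum_antipode_mul_eq_algebraMap_counit]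
  simp [Algebra.algebraMap_eq_smul_one, hφ.1]

lemma mul_charInv_self (hφ : IsCharacter φ) : toConv φ * toConv (charInv φ) = 1 := by
  ext x : 2
  rw [(ℛ ℂ x).convMul_apply]
  simp only [charInv, LinearMap.comp_apply, ← hφ.2, ← map_sum,
    HopfAlgebra.sum_mul_antipode_eq_algebraMap_counit]
  simp [Algebra.algebraMap_eq_smul_one, hφ.1]

end IsCharacter

end Convolution

lemma DirectSum.lsum_decompose_of_mem {R ι M N : Type*} [Semiring R] [DecidableEq ι]
    [AddCommMonoid M] [Module R M] [AddCommMonoid N] [Module R N] (𝒜 : ι → Submodule R M)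
    [Decomposition 𝒜] (F : (i : ι) → 𝒜 i →ₗ[R] N) {i : ι} {x : M} (hx : x ∈ 𝒜 i) :
    DFinsupp.lsum ℕ F (decompose 𝒜 x) = F i ⟨x, hx⟩ := by
  rw [decompose_of_mem 𝒜 hx]
  exact DFinsupp.lsum_single ℕ F i ⟨x, hx⟩

section Graded

variable {H : Type} [Ring H] [HopfAlgebra ℂ H] (𝒜 : ℕ → Submodule ℂ H) [GradedAlgebra 𝒜]

lemma Ymap_of_mem {m : ℕ} {x : H} (hx : x ∈ 𝒜 m) : Ymap 𝒜 x = (m : ℂ) • x :=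
  lsum_decompose_of_mem 𝒜 _ hx

lemma charScale_of_mem (t : ℂ) (φ : H →ₗ[ℂ] LS) {m : ℕ} {x : H} (hx : x ∈ 𝒜 m) :
    charScale 𝒜 t φ x = expL (t * m) * φ x :=
  lsum_decompose_of_mem 𝒜 _ hx

lemma charScale_zero (φ : H →ₗ[ℂ] LS) : charScale 𝒜 0 φ = φ := by
  ext x : 1
  induction x using DirectSum.Decomposition.inductionOn 𝒜 with
  | zero => simp
  | homogeneous x => rw [charScale_of_mem 𝒜 0 φ x.2, zero_mul, expL_zero, one_mul]
  | add x y hx hy => rw [map_add, map_add, hx, hy]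

lemma Ymap_mul (x y : H) : Ymap 𝒜 (x * y) = Ymap 𝒜 x * y + x * Ymap 𝒜 y := by
  induction x using DirectSum.Decomposition.inductionOn 𝒜 with
  | zero => simp
  | add x x' hx hx' => simp only [add_mul, map_add, hx, hx']; abel
  | homogeneous x =>
    induction y using DirectSum.Decomposition.inductionOn 𝒜 with
    | zero => simp
    | add y y' hy hy' => simp only [mul_add, map_add, hy, hy']; abel
    | homogeneous y =>
      rw [Ymap_of_mem 𝒜 (SetLike.mul_mem_graded x.2 y.2), Ymap_of_mem 𝒜 x.2, Ymap_of_mem 𝒜 y.2,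
        smul_mul_assoc, mul_smul_comm, ← add_smul, Nat.cast_add]

lemma hasDerivAt_coeff_mul_charScale (a : LS) (ψ : H →ₗ[ℂ] LS) (x : H) (n : ℤ) :
    HasDerivAt (fun t : ℂ => (a * charScale 𝒜 t ψ x).coeff n)
      ((lam * (a * ψ (Ymap 𝒜 x))).coeff n) 0 := by
  induction x using DirectSum.Decomposition.inductionOn 𝒜 with
  | zero => simpa using hasDerivAt_const (0 : ℂ) (0 : ℂ)
  | add x y hx hy => simpa only [map_add, mul_add, coeff_add] using hx.fun_add hy
  | homogeneous x =>
    simp only [charScale_of_mem 𝒜 _ ψ x.2, Ymap_of_mem 𝒜 x.2, map_smul, mul_left_comm a]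
    rw [mul_smul_comm]
    exact hasDerivAt_coeff_expL_mul _ _ n

end Graded

section TildeBeta

variable {H : Type} [Ring H] [HopfAlgebra ℂ H] (𝒜 : ℕ → Submodule ℂ H) [GradedAlgebra 𝒜]

lemma hasTildeBeta_lam_smul_Rtilde (φ : H →ₗ[ℂ] LS) : HasTildeBeta 𝒜 φ (lam • Rtilde 𝒜 φ) := by
  intro x n
  simp only [(ℛ ℂ x).conv_apply, Rtilde, LinearMap.smul_apply, smul_eq_mul, Finset.mul_sum,
    coeff_sum, LinearMap.comp_apply]
  exact HasDerivAt.fun_sum fun i _ => hasDerivAt_coeff_mul_charScale 𝒜 _ φ _ n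

lemma isInfChar_Rtilde {φ : H →ₗ[ℂ] LS} (hφ : IsCharacter φ) : IsInfChar (Rtilde 𝒜 φ) := by
  intro x y
  have hε : conv (charInv φ) φ = epsA :=
    toConv_injective (by rw [toConv_conv, hφ.charInv_mul_self, toConv_epsA])
  have rx := ℛ ℂ x
  have ry := ℛ ℂ y
  simp only [Rtilde, (rx.mul ry).conv_apply, Coalgebra.Repr.mul_index, Coalgebra.Repr.mul_left,
    Coalgebra.Repr.mul_right, LinearMap.comp_apply, hφ.charInv_mul, Ymap_mul, map_add, hφ.2,
    mul_add, Finset.sum_add_distrib, Finset.sum_product]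
  rw [← hε, rx.conv_apply, ry.conv_apply, rx.conv_apply, ry.conv_apply]
  simp only [Finset.sum_mul_sum, LinearMap.comp_apply, mul_mul_mul_comm]

end TildeBeta

section Birkhoff

variable {H : Type} [Ring H] [HopfAlgebra ℂ H]

lemma charInv_conv_eq_of_isBirkhoff {φ ψ φm p q : H →ₗ[ℂ] LS} (hφ : IsCharacter φ)
    (hp : IsBirkhoff φ φm p) (hq : IsBirkhoff ψ φm q) :
    conv (charInv φ) ψ = conv (charInv p) q := by
  obtain ⟨-, hp_char, -, -, hφ_eq⟩ := hp
  obtain ⟨-, -, -, -, hψ_eq⟩ := hq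
  have hinv : toConv (charInv p) * toConv φm = toConv (charInv φ) := by
    refine left_inv_eq_right_inv (a := toConv φ) ?_ hφ.mul_charInv_self
    rw [mul_assoc (toConv (charInv p)), ← toConv_conv φm φ, hφ_eq, hp_char.charInv_mul_self]
  apply toConv_injective
  rw [toConv_conv, toConv_conv, ← hinv, mul_assoc (toConv (charInv p)), ← toConv_conv φm ψ, hψ_eq]

lemma aplus_conv_charInv_apply {p q : H →ₗ[ℂ] LS} (hp : ∀ x, Aplus (p x)) (hq : ∀ x, Aplus (q x))
    (x : H) : Aplus (conv (charInv p) q x) := by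
  rw [(ℛ ℂ x).conv_apply]
  exact Subring.sum_mem holomorphicSubring fun i _ => Subring.mul_mem _ (hp _) (hq _)

lemma IsLocal.aplus_charInv_conv_charScale_apply {𝒜 : ℕ → Submodule ℂ H} [GradedAlgebra 𝒜]
    {φ : H →ₗ[ℂ] LS} (hloc : IsLocal 𝒜 φ) (t : ℂ) (x : H) :
    Aplus (conv (charInv φ) (charScale 𝒜 t φ) x) := by
  obtain ⟨hφ, φm, hbirkhoff⟩ := hloc
  obtain ⟨p, hp⟩ := hbirkhoff 0
  obtain ⟨q, hq⟩ := hbirkhoff t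
  rw [charScale_zero] at hp
  rw [charInv_conv_eq_of_isBirkhoff hφ hp hq]
  exact aplus_conv_charInv_apply hp.2.2.1 hq.2.2.1 x

end Birkhoff

theorem tildeBeta_infChar_holomorphic_general
    {H : Type} [Ring H] [HopfAlgebra ℂ H]
    (𝒜 : ℕ → Submodule ℂ H) [GradedAlgebra 𝒜]
    (φ : H →ₗ[ℂ] LS) (hloc : IsLocal 𝒜 φ) :
    ∃ B : H →ₗ[ℂ] LS, HasTildeBeta 𝒜 φ B ∧ IsInfChar B ∧ ∀ x, Aplus (B x) := by
  have hB := hasTildeBeta_lam_smul_Rtilde 𝒜 φ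
  refine ⟨lam • Rtilde 𝒜 φ, hB, (isInfChar_Rtilde 𝒜 hloc.1).smul lam, fun x n hn => ?_⟩
  have hconst : (fun t : ℂ => (conv (charInv φ) (charScale 𝒜 t φ) x).coeff n) = fun _ => 0 :=
    funext fun t => hloc.aplus_charInv_conv_charScale_apply t x n hn
  exact (hB x n).unique (hconst ▸ hasDerivAt_const 0 0)

/-- **Lemma.** For a local character `φ` of a graded connected Hopf algebra,
`tildeβ_φ(x) = (d/dt)|₀ (φ⁻¹ ⋆ φ^t)(x)` exists, is an infinitesimal character,
and is holomorphic: `tildeβ_φ(x) ∈ A₊ = ℂ[[λ]]` for every `x ∈ H`. -/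
theorem tildeBeta_infChar_holomorphic
    {H : Type} [Ring H] [HopfAlgebra ℂ H]
    (𝒜 : ℕ → Submodule ℂ H) [GradedAlgebra 𝒜]
    (hconn : IsConnectedGrading 𝒜) (hΔ : ComulGraded 𝒜)
    (hcounit : CounitGraded 𝒜) (hS : AntipodeGraded 𝒜)
    (φ : H →ₗ[ℂ] LS) (hloc : IsLocal 𝒜 φ) :
    ∃ B : H →ₗ[ℂ] LS, HasTildeBeta 𝒜 φ B ∧ IsInfChar B ∧ ∀ x, Aplus (B x) :=
  tildeBeta_infChar_holomorphic_general 𝒜 φ hloc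

end
end

section
/- Let H be a graded connected Hopf algebra over ℂ, let g ∈ G_A be a character with g(x) ∈ A_+ for all x ∈ H (a holomorphic character, e.g. the positive Birkhoff part of any character), and let L ∈ g_A be an infinitesimal character. (i) If L(x) ∈ A_+ for all x, then (Ad(g)L)(x) = (g⋆L⋆g^{-1})(x) ∈ A_+ for all x. (ii) If n ≥ 0 and λ^n·L(x) ∈ A_+ for all x (L has poles of order at most n), then λ^n·(Ad(g)L)(x) ∈ A_+ for all x; i.e. the Lax pair flow L(t) = Ad(g_+(t))L_0 cannot increase the pole order of the initial condition. -/
open scoped TensorProduct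

set_option synthInstance.maxHeartbeats 1000000
set_option maxHeartbeats 1600000
set_option linter.unnecessarySeqFocus false

noncomputable section

lemma aplus_zero : Aplus (0 : LS) := fun n _ => rfl

lemma aplus_add {a b : LS} (ha : Aplus a) (hb : Aplus b) : Aplus (a + b) := by
  intro n hn
  simp [HahnSeries.coeff_add, ha n hn, hb n hn]

lemma aplus_mul {a b : LS} (ha : Aplus a) (hb : Aplus b) : Aplus (a * b) := by
  intro n hn
  rw [HahnSeries.coeff_mul]
  apply Finset.sum_eq_zero
  intro ij hij
  rw [Finset.mem_addAntidiagonal] at hij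
  obtain ⟨h1, h2, h3⟩ := hij
  exfalso
  have ha' : 0 ≤ ij.1 := by
    by_contra hc
    exact h1 (ha ij.1 (lt_of_not_ge hc))
  have hb' : 0 ≤ ij.2 := by
    by_contra hc
    exact h2 (hb ij.2 (lt_of_not_ge hc))
  omega

lemma conv_plus {H : Type} [Ring H] [HopfAlgebra ℂ H] (m₁ m₂ : LS) (f h : H →ₗ[ℂ] LS)
    (hf : ∀ x, Aplus (m₁ * f x)) (hh : ∀ x, Aplus (m₂ * h x)) (x : H) :
    Aplus (m₁ * m₂ * conv f h x) := by
  have key : ∀ t : H ⊗[ℂ] H,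
      Aplus (m₁ * m₂ * LinearMap.mul' ℂ LS (TensorProduct.map f h t)) := by
    intro t
    induction t using TensorProduct.induction_on with
    | zero => simpa using aplus_zero
    | tmul a b =>
        have heq : m₁ * m₂ * LinearMap.mul' ℂ LS (TensorProduct.map f h (a ⊗ₜ[ℂ] b))
            = (m₁ * f a) * (m₂ * h b) := by
          simp [LinearMap.mul'_apply]
          ring
        rw [heq]
        exact aplus_mul (hf a) (hh b)
    | add u v hu hv =>
        rw [map_add, map_add, mul_add]
        exact aplus_add hu hv
  exact key (Coalgebra.comul x)

/-- **Theorem.** Let `g` be a holomorphic character (e.g. the positive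
Birkhoff part of any character) of a graded connected Hopf algebra and `L` an
infinitesimal character.  (i) If `L` is holomorphic-valued then so is
`Ad(g)L = g⋆L⋆g⁻¹`.  (ii) If `L` has poles of order at most `n` (i.e.
`λⁿ·L(x) ∈ A₊` for all `x`) then so does `Ad(g)L`; i.e. the Lax pair flow
`L(t) = Ad(g₊(t))L₀` cannot increase the pole order of the initial
condition. -/
theorem adjoint_preserves_pole_order
    {H : Type} [Ring H] [HopfAlgebra ℂ H]
    (𝒜 : ℕ → Submodule ℂ H) [GradedAlgebra 𝒜]
    (hconn : IsConnectedGrading 𝒜) (hΔ : ComulGraded 𝒜)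
    (hcounit : CounitGraded 𝒜) (hS : AntipodeGraded 𝒜)
    (g L : H →ₗ[ℂ] LS) (hg : IsCharacter g) (hgplus : ∀ x, Aplus (g x))
    (hL : IsInfChar L) :
    ((∀ x, Aplus (L x)) → ∀ x, Aplus (Adc g L x)) ∧
    (∀ n : ℕ, (∀ x, Aplus (lamZ n * L x)) →
      ∀ x, Aplus (lamZ n * Adc g L x)) := by
  have inner : ∀ m : LS, (∀ x, Aplus (m * L x)) → ∀ x, Aplus (m * Adc g L x) := by
    intro m hm x
    have hgi : ∀ y : H, Aplus ((1 : LS) * charInv g y) := fun y => by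
      rw [one_mul]; exact hgplus _
    have hg1 : ∀ y : H, Aplus ((1 : LS) * g y) := fun y => by
      rw [one_mul]; exact hgplus _
    have h1 : ∀ y : H, Aplus (m * 1 * conv L (charInv g) y) :=
      fun y => conv_plus m 1 L (charInv g) hm hgi y
    have h2 : Aplus (1 * (m * 1) * conv g (conv L (charInv g)) x) :=
      conv_plus 1 (m * 1) g (conv L (charInv g)) hg1 h1 x
    simpa [Adc, mul_one, one_mul] using h2
  constructor
  · intro hLp x
    have h := inner 1 (fun y => by rw [one_mul]; exact hLp y) x
    simpa using h
  · intro n hn x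
    exact inner (lamZ n) hn x


end
end
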